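/- Let (V,d) be a finite metric space, p ≥ 1 a real number, t ≥ 1 an integer, and let F, F* ⊆ V be nonempty sets with |F| = |F*| = k. Suppose F is t-swap locally optimal for the ℓ_p objective, i.e., for every R ⊆ F and A ⊆ V with |R| = |A| ≤ t we have Φ_p((F \ R) ∪ A) ≥ Φ_p(F). Then Φ_p(F*)^p − (2 + 1/t)·Φ_p(F)^p + (1 + 1/t)·(2·Φ_p(F*) + Φ_p(F))^p ≥ 0. -/

import Mathlib

open Finset

/-- Distance from a client `j` to a nonempty facility set `F`: `min_{f ∈ F} d(j,f)`. -/
noncomputable def distSet {V : Type*} [MetricSpace V] (j : V) (F : Finset V)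
    (hF : F.Nonempty) : ℝ :=
  F.inf' hF fun f => dist j f

/-- The ℓ_p-norm cost of a nonempty facility set `F`:
`Φ_p(F) = (∑_{j ∈ V} d(j,F)^p)^{1/p}`. -/
noncomputable def phiP {V : Type*} [MetricSpace V] [Fintype V] (p : ℝ) (F : Finset V)
    (hF : F.Nonempty) : ℝ :=
  (∑ j : V, distSet j F hF ^ p) ^ (1 / p)

/-!
For each optimal facility `b ∈ F*` let `η b` be its nearest facility of `F`. Swapping in a group
of optimal facilities while closing facilities that are not `η` of any untouched optimal facility
can be paid for client by client: a client whose optimal facility is opened pays `d(j,F*)`, a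
client whose facility is closed reroutes to `η` of its optimal facility at cost at most
`2 d(j,F*) + d(j,F)`. Grouping the optimal facilities by `η` and pairing each group with
facilities of `F` that capture nothing gives admissible swaps covering every optimal facility
once and every facility of `F` at most `1 + 1/t` times on average (groups larger than `t` are
split into single swaps). Summing the local-optimality inequalities and applying Minkowski's
inequality to `2 d(·,F*) + d(·,F)` yields the bound.
-/

theorem Finset.exists_subset_card_eq_mul_sum_le {ι : Type*} [DecidableEq ι] (h : ι → ℝ)
    (D : Finset ι) {r : ℕ} (hr : r ≤ #D) :
    ∃ S ⊆ D, #S = r ∧ (#D : ℝ) * ∑ i ∈ S, h i ≤ r * ∑ i ∈ D, h i := by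
  induction D using Finset.induction_on_max_value h generalizing r with
  | empty => exact ⟨∅, subset_rfl, by simp_all, by simp⟩
  | insert a D ha hmax ih =>
    rw [card_insert_of_notMem ha] at hr ⊢
    rcases hr.eq_or_lt with rfl | hr
    · exact ⟨insert a D, subset_rfl, card_insert_of_notMem ha, by push_cast; rfl⟩
    obtain ⟨S, hSD, hS, hSsum⟩ := ih (Nat.le_of_lt_succ hr)
    have hS_le : ∑ i ∈ S, h i ≤ r * h a := by
      simpa [hS] using sum_le_sum fun i hi => hmax i (hSD hi)
    refine ⟨S, hSD.trans (subset_insert a D), hS, ?_⟩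
    rw [sum_insert ha]
    push_cast
    linarith

/-- `g b` and `h a` stand for estimates of the cost change caused by opening `b` and closing `a`. -/
def AdmissibleSwapsNonneg {α β : Type*} (t : ℕ) (F : Finset α) (Fstar : Finset β) (η : β → α)
    (g : β → ℝ) (h : α → ℝ) : Prop :=
  ∀ R ⊆ F, ∀ A ⊆ Fstar, A.Nonempty → #R = #A → #A ≤ t → (∀ b ∈ Fstar, b ∉ A → η b ∉ R) →
    0 ≤ ∑ b ∈ A, g b + ∑ a ∈ R, h a

namespace AdmissibleSwapsNonneg

variable {α β : Type*} [DecidableEq α] {t : ℕ} {F : Finset α} {Fstar : Finset β} {η : β → α}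
  {g : β → ℝ} {h : α → ℝ}

lemma one_le_card_fiber {a : α} (ha : a ∈ Fstar.image η) : 1 ≤ #{b ∈ Fstar | η b = a} := by
  obtain ⟨b, hb, hba⟩ := mem_image.1 ha
  exact card_pos.2 ⟨b, mem_filter.2 ⟨hb, hba⟩⟩

lemma sum_card_fiber_sub_one_le (hη : Set.MapsTo η Fstar F) (hcard : #Fstar ≤ #F) :
    ∑ a ∈ Fstar.image η, ((#{b ∈ Fstar | η b = a} : ℝ) - 1) ≤ #(F \ Fstar.image η) := by
  rw [sum_sub_distrib, ← Nat.cast_sum,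
    ← card_eq_sum_card_fiberwise fun b hb => mem_image_of_mem η hb,
    card_sdiff_of_subset (image_subset_iff.2 hη)]
  have := card_le_card (image_subset_iff.2 hη)
  simp only [sum_const, nsmul_eq_mul, mul_one]
  push_cast [this]
  linarith [(Nat.cast_le (α := ℝ)).2 hcard]

lemma card_fiber_sub_one_le (hη : Set.MapsTo η Fstar F) (hcard : #Fstar ≤ #F) {a : α}
    (ha : a ∈ Fstar.image η) : #{b ∈ Fstar | η b = a} - 1 ≤ #(F \ Fstar.image η) := by
  have hsum := (single_le_sum (fun a' ha' => ?_) ha).trans (sum_card_fiber_sub_one_le hη hcard)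
  · have : (#{b ∈ Fstar | η b = a} : ℝ) ≤ #(F \ Fstar.image η) + 1 := by linarith
    have : #{b ∈ Fstar | η b = a} ≤ #(F \ Fstar.image η) + 1 := by exact_mod_cast this
    omega
  · simpa using one_le_card_fiber ha'

lemma sum_fiber_add_nonneg_of_card_le (hswap : AdmissibleSwapsNonneg t F Fstar η g h)
    (hη : Set.MapsTo η Fstar F) {a : α} (ha : a ∈ Fstar.image η)
    (hsmall : #{b ∈ Fstar | η b = a} ≤ t)
    (hfiber : #{b ∈ Fstar | η b = a} - 1 ≤ #(F \ Fstar.image η)) :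
    0 ≤ ∑ b ∈ Fstar with η b = a, g b + h a +
      ((#{b ∈ Fstar | η b = a} : ℝ) - 1) / #(F \ Fstar.image η) *
        ∑ d ∈ F \ Fstar.image η, h d := by
  set D := F \ Fstar.image η
  obtain ⟨b₀, hb₀, rfl⟩ := mem_image.1 ha
  have hfiber_pos : 0 < #{b ∈ Fstar | η b = η b₀} := card_pos.2 ⟨b₀, mem_filter.2 ⟨hb₀, rfl⟩⟩
  obtain ⟨S, hSD, hS, hSsum⟩ := exists_subset_card_eq_mul_sum_le h D hfiber
  have haS : η b₀ ∉ S := fun haS => (mem_sdiff.1 (hSD haS)).2 ha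
  have hswapped := hswap (insert (η b₀) S) (insert_subset (hη hb₀) (hSD.trans sdiff_subset))
    _ (filter_subset _ _) (card_pos.1 hfiber_pos) (by rw [card_insert_of_notMem haS]; omega)
    hsmall fun b hb hbA hbR => ?_
  · rw [sum_insert haS] at hswapped
    have hS_le : ∑ d ∈ S, h d ≤ ((#{b ∈ Fstar | η b = η b₀} : ℝ) - 1) / #D * ∑ d ∈ D, h d := by
      rcases (#D).eq_zero_or_pos with hD | hD
      · simp [card_eq_zero.1 hD] at hSD
        simp [hSD, hD]
      · rw [div_mul_eq_mul_div, le_div_iff₀ (by exact_mod_cast hD), mul_comm]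
        simpa [hS, Nat.cast_sub hfiber_pos] using hSsum
    linarith
  · rcases mem_insert.1 hbR with hba | hbS
    · exact hbA (mem_filter.2 ⟨hb, hba⟩)
    · exact (mem_sdiff.1 (hSD hbS)).2 (mem_image_of_mem η hb)

lemma sum_fiber_add_nonneg_of_lt_card (hswap : AdmissibleSwapsNonneg t F Fstar η g h)
    (ht : 1 ≤ t) {a : α} (hbig : t < #{b ∈ Fstar | η b = a})
    (hfiber : #{b ∈ Fstar | η b = a} - 1 ≤ #(F \ Fstar.image η)) :
    0 ≤ ∑ b ∈ Fstar with η b = a, g b +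
      #{b ∈ Fstar | η b = a} / #(F \ Fstar.image η) * ∑ d ∈ F \ Fstar.image η, h d := by
  set D := F \ Fstar.image η
  have hD : (0 : ℝ) < #D := by exact_mod_cast (show 0 < #D by omega)
  -- swapping `b` against each facility of `D` in turn and averaging
  have hg : ∀ b ∈ Fstar, -(∑ d ∈ D, h d) / #D ≤ g b := by
    intro b hb
    have hswapped : ∀ d ∈ D, 0 ≤ g b + h d := fun d hd => by
      simpa using hswap {d} (singleton_subset_iff.2 (mem_sdiff.1 hd).1) {b}
        (singleton_subset_iff.2 hb) (singleton_nonempty b) rfl (by simpa using ht)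
        fun b' hb' _ hb'd => (mem_sdiff.1 hd).2 (mem_image.2 ⟨b', hb', mem_singleton.1 hb'd⟩)
    have := sum_nonneg hswapped
    rw [sum_add_distrib, sum_const, nsmul_eq_mul] at this
    rw [div_le_iff₀ hD]
    linarith
  have := card_nsmul_le_sum {b ∈ Fstar | η b = a} g _ fun b hb => hg b (mem_filter.1 hb).1
  rw [nsmul_eq_mul, mul_div_assoc', mul_neg, neg_div] at this
  rw [div_mul_eq_mul_div]
  linarith

lemma sum_fiber_add_nonneg (hswap : AdmissibleSwapsNonneg t F Fstar η g h) (ht : 1 ≤ t)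
    (hη : Set.MapsTo η Fstar F) (hcard : #Fstar ≤ #F) (hh : ∀ a ∈ F, 0 ≤ h a) {a : α}
    (ha : a ∈ Fstar.image η) :
    0 ≤ ∑ b ∈ Fstar with η b = a, g b + h a + (1 + 1 / t) *
      (((#{b ∈ Fstar | η b = a} : ℝ) - 1) / #(F \ Fstar.image η) *
        ∑ d ∈ F \ Fstar.image η, h d) := by
  have hfiber := card_fiber_sub_one_le hη hcard ha
  have hm : (1 : ℝ) ≤ #{b ∈ Fstar | η b = a} := by exact_mod_cast one_le_card_fiber ha
  set m := #{b ∈ Fstar | η b = a}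
  set n := #(F \ Fstar.image η)
  have hH : 0 ≤ ∑ d ∈ F \ Fstar.image η, h d := sum_nonneg fun d hd => hh d (mem_sdiff.1 hd).1
  have ha_nonneg : 0 ≤ h a := hh a (image_subset_iff.2 hη ha)
  have ht' : (1 : ℝ) ≤ t := by exact_mod_cast ht
  rcases le_or_gt m t with hsmall | hbig
  · have := sum_fiber_add_nonneg_of_card_le hswap hη ha hsmall hfiber
    have : ((m : ℝ) - 1) / n * ∑ d ∈ F \ Fstar.image η, h d ≤
        (1 + 1 / t) * (((m : ℝ) - 1) / n * ∑ d ∈ F \ Fstar.image η, h d) :=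
      le_mul_of_one_le_left (by positivity) (by simp)
    linarith
  · have := sum_fiber_add_nonneg_of_lt_card hswap ht hbig hfiber
    have hbig' : (t : ℝ) + 1 ≤ m := by exact_mod_cast hbig
    have h1 : 1 ≤ ((m : ℝ) - 1) / t := by rw [le_div_iff₀ (by positivity)]; linarith
    have hm' : (m : ℝ) ≤ (1 + 1 / t) * (m - 1) := by
      calc (m : ℝ) ≤ (m - 1) + (m - 1) / t := by linarith
        _ = (1 + 1 / t) * (m - 1) := by ring
    have : (m : ℝ) / n * ∑ d ∈ F \ Fstar.image η, h d ≤
        (1 + 1 / t) * (((m : ℝ) - 1) / n * ∑ d ∈ F \ Fstar.image η, h d) := by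
      rw [← mul_assoc, ← mul_div_assoc]
      gcongr
    linarith

theorem sum_add_mul_sum_nonneg (hswap : AdmissibleSwapsNonneg t F Fstar η g h) (ht : 1 ≤ t)
    (hη : Set.MapsTo η Fstar F) (hcard : #Fstar ≤ #F) (hh : ∀ a ∈ F, 0 ≤ h a) :
    0 ≤ ∑ b ∈ Fstar, g b + (1 + 1 / t) * ∑ a ∈ F, h a := by
  set C := Fstar.image η
  set D := F \ C
  have hCF : C ⊆ F := image_subset_iff.2 hη
  have hgroups := sum_nonneg fun a ha => sum_fiber_add_nonneg hswap ht hη hcard hh (a := a) ha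
  rw [sum_add_distrib, sum_add_distrib,
    sum_fiberwise_of_maps_to fun b hb => mem_image_of_mem η hb,
    ← mul_sum, ← sum_mul, ← sum_div] at hgroups
  have hH : 0 ≤ ∑ d ∈ D, h d := sum_nonneg fun d hd => hh d (mem_sdiff.1 hd).1
  have hweights : (∑ a ∈ C, ((#{b ∈ Fstar | η b = a} : ℝ) - 1)) / #D * ∑ d ∈ D, h d ≤
      ∑ d ∈ D, h d :=
    mul_le_of_le_one_left hH
      (div_le_one_of_le₀ (sum_card_fiber_sub_one_le hη hcard) (Nat.cast_nonneg _))
  have hC : ∑ a ∈ C, h a ≤ (1 + 1 / t) * ∑ a ∈ C, h a :=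
    le_mul_of_one_le_left (sum_nonneg fun a ha => hh a (hCF ha)) (by simp)
  have := mul_le_mul_of_nonneg_left hweights (by positivity : (0 : ℝ) ≤ 1 + 1 / t)
  rw [← sum_sdiff hCF]
  linarith

end AdmissibleSwapsNonneg

lemma Real.sum_rpow_two_mul_add_le {ι : Type*} (s : Finset ι) {p : ℝ} (hp : 1 ≤ p) {f g : ι → ℝ}
    (hf : ∀ i ∈ s, 0 ≤ f i) (hg : ∀ i ∈ s, 0 ≤ g i) :
    ∑ i ∈ s, (2 * f i + g i) ^ p ≤
      (2 * (∑ i ∈ s, f i ^ p) ^ (1 / p) + (∑ i ∈ s, g i ^ p) ^ (1 / p)) ^ p := by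
  have hfg : ∀ i ∈ s, 0 ≤ f i + g i := fun i hi => add_nonneg (hf i hi) (hg i hi)
  have hnorm : (∑ i ∈ s, (2 * f i + g i) ^ p) ^ (1 / p) ≤
      2 * (∑ i ∈ s, f i ^ p) ^ (1 / p) + (∑ i ∈ s, g i ^ p) ^ (1 / p) := by
    have h₁ := Real.Lp_add_le_of_nonneg s hp hf hfg
    have h₂ := Real.Lp_add_le_of_nonneg s hp hf hg
    simp_rw [← add_assoc, ← two_mul] at h₁
    linarith
  have hsum : 0 ≤ ∑ i ∈ s, (2 * f i + g i) ^ p :=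
    sum_nonneg fun i hi => Real.rpow_nonneg (by linarith [hf i hi, hg i hi]) p
  calc ∑ i ∈ s, (2 * f i + g i) ^ p = ((∑ i ∈ s, (2 * f i + g i) ^ p) ^ (1 / p)) ^ p := by
        rw [← Real.rpow_mul hsum, one_div_mul_cancel (by positivity), Real.rpow_one]
    _ ≤ _ := Real.rpow_le_rpow (by positivity) hnorm (by positivity)

section Nearest

variable {V : Type*} [MetricSpace V] {F : Finset V} (hF : F.Nonempty)

lemma distSet_nonneg (j : V) : 0 ≤ distSet j F hF :=
  le_inf' hF _ fun _ _ => dist_nonneg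

lemma distSet_le_dist {j f : V} (hf : f ∈ F) : distSet j F hF ≤ dist j f :=
  inf'_le _ hf

noncomputable def nearest (j : V) (F : Finset V) (hF : F.Nonempty) : V :=
  (exists_mem_eq_inf' hF fun f => dist j f).choose

lemma nearest_mem (j : V) : nearest j F hF ∈ F :=
  (exists_mem_eq_inf' hF fun f => dist j f).choose_spec.1

lemma dist_nearest (j : V) : dist j (nearest j F hF) = distSet j F hF :=
  (exists_mem_eq_inf' hF fun f => dist j f).choose_spec.2.symm

lemma dist_nearest_le (j y : V) : dist j (nearest y F hF) ≤ 2 * dist j y + distSet j F hF :=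
  calc dist j (nearest y F hF) ≤ dist j y + distSet y F hF := by
        rw [← dist_nearest hF]; exact dist_triangle _ _ _
    _ ≤ dist j y + dist y (nearest j F hF) := by gcongr; exact distSet_le_dist hF (nearest_mem hF j)
    _ ≤ dist j y + (dist y j + dist j (nearest j F hF)) := by gcongr; exact dist_triangle _ _ _
    _ = 2 * dist j y + distSet j F hF := by rw [dist_nearest, dist_comm y j]; ring

end Nearest

section Cost

variable {V : Type*} [MetricSpace V] [Fintype V] {F : Finset V} (hF : F.Nonempty)

lemma phiP_nonneg (p : ℝ) : 0 ≤ phiP p F hF :=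
  Real.rpow_nonneg (sum_nonneg fun j _ => Real.rpow_nonneg (distSet_nonneg hF j) p) _

lemma phiP_rpow {p : ℝ} (hp : p ≠ 0) : phiP p F hF ^ p = ∑ j, distSet j F hF ^ p := by
  rw [phiP, ← Real.rpow_mul (sum_nonneg fun j _ => Real.rpow_nonneg (distSet_nonneg hF j) p),
    one_div_mul_cancel hp, Real.rpow_one]

variable [DecidableEq V]

noncomputable def clusterSum (F : Finset V) (hF : F.Nonempty) (x : V → ℝ) (c : V) : ℝ :=
  ∑ j with nearest j F hF = c, x j

lemma sum_clusterSum (A : Finset V) (x : V → ℝ) :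
    ∑ c ∈ A, clusterSum F hF x c = ∑ j, if nearest j F hF ∈ A then x j else 0 := by
  rw [← sum_filter]
  exact sum_fiberwise_eq_sum_filter _ _ _ _

lemma sum_clusterSum_self (x : V → ℝ) : ∑ c ∈ F, clusterSum F hF x c = ∑ j, x j :=
  sum_fiberwise_of_maps_to (fun j _ => nearest_mem hF j) x

end Cost

section Swap

variable {V : Type*} [MetricSpace V] {F Fstar : Finset V} (hF : F.Nonempty)
  (hFstar : Fstar.Nonempty)

noncomputable def reassignGain (p : ℝ) (j : V) : ℝ :=
  distSet j Fstar hFstar ^ p - distSet j F hF ^ p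

noncomputable def detourCost (p : ℝ) (j : V) : ℝ :=
  (2 * distSet j Fstar hFstar + distSet j F hF) ^ p - distSet j F hF ^ p

lemma detourCost_nonneg {p : ℝ} (hp : 0 ≤ p) (j : V) : 0 ≤ detourCost hF hFstar p j :=
  sub_nonneg.2 <| Real.rpow_le_rpow (distSet_nonneg hF j)
    (by linarith [distSet_nonneg hFstar j]) hp

variable [DecidableEq V]

lemma rpow_distSet_swap_sub_le {p : ℝ} (hp : 0 ≤ p) (j : V) {R A : Finset V}
    (hne : (F \ R ∪ A).Nonempty) (hkeep : ∀ b ∈ Fstar, b ∉ A → nearest b F hF ∉ R) :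
    distSet j (F \ R ∪ A) hne ^ p - distSet j F hF ^ p ≤
      (if nearest j Fstar hFstar ∈ A then reassignGain hF hFstar p j else 0) +
        if nearest j F hF ∈ R then detourCost hF hFstar p j else 0 := by
  have hdetour := detourCost_nonneg hF hFstar hp j
  have hmono {x : ℝ} (hx : distSet j (F \ R ∪ A) hne ≤ x) :=
    Real.rpow_le_rpow (distSet_nonneg hne j) hx hp
  unfold reassignGain detourCost at *
  split_ifs with hA hR hR
  · have := hmono ((distSet_le_dist hne (mem_union_right _ hA)).trans_eq (dist_nearest hFstar j))
    linarith
  · have := hmono ((distSet_le_dist hne (mem_union_right _ hA)).trans_eq (dist_nearest hFstar j))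
    linarith
  · have hsurvive : nearest (nearest j Fstar hFstar) F hF ∈ F \ R ∪ A :=
      mem_union_left _ (mem_sdiff.2 ⟨nearest_mem hF _, hkeep _ (nearest_mem hFstar j) hA⟩)
    have := hmono ((distSet_le_dist hne hsurvive).trans <| by
      simpa only [dist_nearest] using dist_nearest_le hF j (nearest j Fstar hFstar))
    linarith
  · have hsurvive : nearest j F hF ∈ F \ R ∪ A :=
      mem_union_left _ (mem_sdiff.2 ⟨nearest_mem hF j, hR⟩)
    have := hmono ((distSet_le_dist hne hsurvive).trans_eq (dist_nearest hF j))
    linarith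

variable [Fintype V]

lemma admissibleSwapsNonneg_of_le_phiP {p : ℝ} (hp : 0 < p) {t : ℕ}
    (hlocal : ∀ R ⊆ F, ∀ A : Finset V, R.card = A.card → A.card ≤ t →
      ∀ hne : ((F \ R) ∪ A).Nonempty, phiP p ((F \ R) ∪ A) hne ≥ phiP p F hF) :
    AdmissibleSwapsNonneg t F Fstar (nearest · F hF)
      (clusterSum Fstar hFstar (reassignGain hF hFstar p))
      (clusterSum F hF (detourCost hF hFstar p)) := by
  intro R hR A _ hAne hcard hAt hkeep
  have hne : (F \ R ∪ A).Nonempty := hAne.mono subset_union_right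
  have hle : ∑ j, distSet j F hF ^ p ≤ ∑ j, distSet j (F \ R ∪ A) hne ^ p := by
    rw [← phiP_rpow hF hp.ne', ← phiP_rpow hne hp.ne']
    exact Real.rpow_le_rpow (phiP_nonneg hF p) (hlocal R hR A hcard hAt hne) hp.le
  have := sum_le_sum fun j (_ : j ∈ univ) => rpow_distSet_swap_sub_le hF hFstar hp.le j hne hkeep
  rw [sum_sub_distrib, sum_add_distrib, ← sum_clusterSum, ← sum_clusterSum] at this
  linarith

end Swap

/-- At a `t`-swap local optimum for the ℓ_p objective,
`Φ_p(F*)^p − (2 + 1/t)·Φ_p(F)^p + (1 + 1/t)·(2·Φ_p(F*) + Φ_p(F))^p ≥ 0`. -/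
theorem lp_t_swap_inequality {V : Type*} [MetricSpace V] [Fintype V] [DecidableEq V]
    (p : ℝ) (hp : 1 ≤ p) (t : ℕ) (ht : 1 ≤ t) (k : ℕ)
    (F Fstar : Finset V) (hF : F.Nonempty) (hFstar : Fstar.Nonempty)
    (hcardF : F.card = k) (hcardFstar : Fstar.card = k)
    (hlocal : ∀ R ⊆ F, ∀ A : Finset V, R.card = A.card → A.card ≤ t →
      ∀ hne : ((F \ R) ∪ A).Nonempty, phiP p ((F \ R) ∪ A) hne ≥ phiP p F hF) :
    phiP p Fstar hFstar ^ p - (2 + 1 / (t : ℝ)) * phiP p F hF ^ p +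
        (1 + 1 / (t : ℝ)) * (2 * phiP p Fstar hFstar + phiP p F hF) ^ p ≥ 0 := by
  have hp0 : 0 < p := by linarith
  have key := (admissibleSwapsNonneg_of_le_phiP hF hFstar hp0 hlocal).sum_add_mul_sum_nonneg ht
    (fun b _ => nearest_mem hF b) (by omega)
    fun a _ => sum_nonneg fun j _ => detourCost_nonneg hF hFstar hp0.le j
  simp only [sum_clusterSum_self, reassignGain, detourCost, sum_sub_distrib,
    ← phiP_rpow hF hp0.ne', ← phiP_rpow hFstar hp0.ne'] at key
  have hminkowski : ∑ j, (2 * distSet j Fstar hFstar + distSet j F hF) ^ p ≤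
      (2 * phiP p Fstar hFstar + phiP p F hF) ^ p :=
    Real.sum_rpow_two_mul_add_le univ hp (fun j _ => distSet_nonneg hFstar j)
      fun j _ => distSet_nonneg hF j
  have := mul_le_mul_of_nonneg_left hminkowski (by positivity : (0 : ℝ) ≤ 1 + 1 / t)
  linarith
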